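/- Let Θ ⊂ ℝ^d, let g : Θ → ℝ be a fixed function with associated bump B̄ = {x ∈ Θ : g(x) ≥ 0}, and for each n let G_n : Θ → ℝ be a random function on a common probability space. For ζ ≥ 0 define the random sets D̂_n⁺(ζ) = {x ∈ Θ : G_n(x) ≥ −ζ} and D̂_n⁻(ζ) = {x ∈ Θ : G_n(x) ≥ ζ}. Assume: (I) there are random variables Z_n such that, almost surely for all sufficiently large n, sup_{x ∈ Θ} |G_n(x) − g(x)| ≤ Z_n; moreover √n Z_n converges weakly to a random variable 𝒵 whose cumulative distribution function is continuous and strictly increasing; (II) for a given α ∈ (0,1) there is a sequence ζ_n with ζ_n ≥ q_{1−α}(Z_n) for all n and ζ_n → 0; (III) there is a sequence ζ̂_n with |ζ̂_n − ζ_n| = o(n^{-1/2}). Then liminf_{n→∞} P( D̂_n⁻(ζ̂_n) ⊆ B̄ ⊆ D̂_n⁺(ζ̂_n) ) ≥ 1 − α, and ζ̂_n → 0. -/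

import Mathlib

open MeasureTheory Filter Topology ProbabilityTheory

/-- The `p`-th (lower) quantile of a random variable `X`: `inf {t | P(X ≤ t) ≥ p}`. -/
noncomputable def lowerQuantile {Ω : Type*} [MeasureSpace Ω] (X : Ω → ℝ) (p : ℝ) : ℝ :=
  sInf {t : ℝ | p ≤ (ℙ {ω | X ω ≤ t}).toReal}

lemma quantile_prop {Ω : Type*} [MeasureSpace Ω] [IsProbabilityMeasure (ℙ : Measure Ω)]
    (X : Ω → ℝ) (hX : Measurable X) {p : ℝ} (hp0 : 0 < p) (hp1 : p < 1) :
    p ≤ (ℙ {ω | X ω ≤ lowerQuantile X p}).toReal := by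
  set S := {t : ℝ | p ≤ (ℙ {ω | X ω ≤ t}).toReal} with hS
  have hmeas : ∀ c : ℝ, MeasurableSet {ω | X ω ≤ c} := fun c => hX measurableSet_Iic
  have hne : S.Nonempty := by
    have hu : (⋃ k : ℕ, {ω | X ω ≤ (k : ℝ)}) = Set.univ := by
      ext ω
      simp only [Set.mem_iUnion, Set.mem_univ, iff_true, Set.mem_setOf_eq]
      obtain ⟨k, hk⟩ := exists_nat_ge (X ω)
      exact ⟨k, hk⟩
    have hmono' : Monotone (fun k : ℕ => {ω | X ω ≤ (k : ℝ)}) := by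
      intro i j hij ω h
      simp only [Set.mem_setOf_eq] at *
      exact le_trans h (by exact_mod_cast hij)
    have h1 := tendsto_measure_iUnion_atTop (μ := (ℙ : Measure Ω)) hmono'
    rw [hu, measure_univ] at h1
    have h2 : Tendsto (fun k : ℕ => (ℙ {ω | X ω ≤ (k : ℝ)}).toReal) atTop (𝓝 1) := by
      have := (ENNReal.tendsto_toReal ENNReal.one_ne_top).comp h1
      simpa [Function.comp_def] using this
    obtain ⟨k, hk⟩ := (h2.eventually (eventually_ge_nhds hp1)).exists
    exact ⟨k, hk⟩
  have hbdd : BddBelow S := by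
    have hint : (⋂ k : ℕ, {ω | X ω ≤ -(k : ℝ)}) = ∅ := by
      ext ω
      simp only [Set.mem_iInter, Set.mem_setOf_eq, Set.mem_empty_iff_false, iff_false, not_forall]
      obtain ⟨k, hk⟩ := exists_nat_gt (-(X ω))
      exact ⟨k, by push_neg; linarith⟩
    have hanti : Antitone (fun k : ℕ => {ω | X ω ≤ -(k : ℝ)}) := by
      intro i j hij ω h
      simp only [Set.mem_setOf_eq] at *
      have : (i : ℝ) ≤ j := by exact_mod_cast hij
      linarith
    have h1 := tendsto_measure_iInter_atTop (μ := (ℙ : Measure Ω))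
      (fun k => (hmeas _).nullMeasurableSet) hanti ⟨0, measure_ne_top _ _⟩
    rw [hint, measure_empty] at h1
    have hp' : (0 : ENNReal) < ENNReal.ofReal p := by simpa using hp0
    obtain ⟨k, hk⟩ := (h1.eventually (eventually_lt_nhds hp')).exists
    refine ⟨-(k : ℝ), fun t ht => ?_⟩
    by_contra hcon
    push_neg at hcon
    have h2 : ℙ {ω | X ω ≤ t} ≤ ℙ {ω | X ω ≤ -(k : ℝ)} :=
      measure_mono fun ω h => le_trans h hcon.le
    have h3 : (ℙ {ω | X ω ≤ t}).toReal < p := by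
      have := lt_of_le_of_lt h2 hk
      rwa [ENNReal.lt_ofReal_iff_toReal_lt (measure_ne_top _ _)] at this
    exact absurd ht (by simp [hS]; linarith)
  set q := sInf S with hq
  have hstep : ∀ δ : ℝ, 0 < δ → p ≤ (ℙ {ω | X ω ≤ q + δ}).toReal := by
    intro δ hδ
    have : sInf S < q + δ := by rw [← hq]; linarith
    obtain ⟨t, htS, htlt⟩ := (csInf_lt_iff hbdd hne).1 this
    refine le_trans htS (ENNReal.toReal_mono (measure_ne_top _ _)
      (measure_mono fun ω h => le_trans h htlt.le))
  have hiInter : {ω | X ω ≤ q} = ⋂ k : ℕ, {ω | X ω ≤ q + 1 / (k + 1)} := by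
    ext ω
    simp only [Set.mem_iInter, Set.mem_setOf_eq]
    constructor
    · intro h k
      have : (0:ℝ) < 1 / (k + 1) := by positivity
      linarith
    · intro h
      refine le_of_forall_pos_le_add fun ε hε => ?_
      obtain ⟨k, hk⟩ := exists_nat_one_div_lt hε
      have := h k
      linarith
  have hanti : Antitone (fun k : ℕ => {ω | X ω ≤ q + 1 / ((k : ℝ) + 1)}) := by
    intro i j hij ω h
    simp only [Set.mem_setOf_eq] at *
    have h1 : (1 : ℝ) / (j + 1) ≤ 1 / (i + 1) := by
      apply one_div_le_one_div_of_le
      · positivity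
      · exact_mod_cast Nat.add_le_add_right hij 1
    linarith
  have h1 := tendsto_measure_iInter_atTop (μ := (ℙ : Measure Ω))
    (fun k => (hmeas _).nullMeasurableSet) hanti ⟨0, measure_ne_top _ _⟩
  rw [← hiInter] at h1
  show p ≤ (ℙ {ω | X ω ≤ q}).toReal
  have h2 : ENNReal.ofReal p ≤ ℙ {ω | X ω ≤ q} := by
    refine ge_of_tendsto h1 (Eventually.of_forall fun k => ?_)
    exact ENNReal.ofReal_le_of_le_toReal (hstep _ (by positivity))
  rw [← ENNReal.ofReal_le_iff_le_toReal (measure_ne_top _ _)]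
  exact h2

/-- abstract vertical inference scheme for bumps.  If the plug-in error is
a.s. eventually dominated by random variables `Z n` with `√n · Z n` converging weakly to a
limit with continuous strictly increasing CDF `F`, and the margins `ζ̂ n` approximate
upper bounds `ζ n` of the `(1−α)`-quantiles of `Z n` up to `o(n^{-1/2})`, then the bump
`B̄ = {x ∈ Θ : g x ≥ 0}` is sandwiched between the estimated confidence sets with
asymptotic probability at least `1 − α`, and `ζ̂ n → 0`. -/
theorem stmt8 {Ω : Type*} [MeasureSpace Ω] [IsProbabilityMeasure (ℙ : Measure Ω)]
    {d : ℕ} (Θ : Set (EuclideanSpace ℝ (Fin d))) (g : EuclideanSpace ℝ (Fin d) → ℝ)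
    (G : ℕ → Ω → EuclideanSpace ℝ (Fin d) → ℝ)
    (Z : ℕ → Ω → ℝ) (hZmeas : ∀ n, Measurable (Z n))
    (hZ : ∀ᵐ ω ∂ℙ, ∀ᶠ n in atTop, ∀ x ∈ Θ, |G n ω x - g x| ≤ Z n ω)
    (F : ℝ → ℝ) (hFc : Continuous F) (hFmono : StrictMono F)
    (hF0 : Tendsto F atBot (𝓝 0)) (hF1 : Tendsto F atTop (𝓝 1))
    (hweak : ∀ t : ℝ, Tendsto
      (fun n : ℕ => (ℙ {ω | Real.sqrt n * Z n ω ≤ t}).toReal) atTop (𝓝 (F t)))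
    (α : ℝ) (hα : α ∈ Set.Ioo (0 : ℝ) 1)
    (ζ : ℕ → ℝ) (hζq : ∀ n, lowerQuantile (Z n) (1 - α) ≤ ζ n)
    (hζ0 : Tendsto ζ atTop (𝓝 0))
    (ζhat : ℕ → ℝ)
    (hζhat : (fun n : ℕ => ζhat n - ζ n) =o[atTop] fun n : ℕ => (n : ℝ) ^ (-(1 : ℝ) / 2)) :
    (1 - α ≤ liminf (fun n : ℕ => (ℙ {ω |
        {x ∈ Θ | ζhat n ≤ G n ω x} ⊆ {x ∈ Θ | 0 ≤ g x}
        ∧ {x ∈ Θ | 0 ≤ g x} ⊆ {x ∈ Θ | -ζhat n ≤ G n ω x}}).toReal) atTop)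
    ∧ Tendsto ζhat atTop (𝓝 0) := by
  obtain ⟨hα0, hα1⟩ := hα
  have hrneg : Tendsto (fun n : ℕ => (n : ℝ) ^ (-(1 : ℝ) / 2)) atTop (𝓝 0) := by
    have h := tendsto_rpow_neg_atTop (y := (1 : ℝ) / 2) (by norm_num)
    have h2 := h.comp tendsto_natCast_atTop_atTop (α := ℕ)
    simpa [Function.comp_def, neg_div] using h2
  have hdiff0 : Tendsto (fun n : ℕ => ζhat n - ζ n) atTop (𝓝 0) := hζhat.trans_tendsto hrneg
  have hζhat0 : Tendsto ζhat atTop (𝓝 0) := by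
    have h := hζ0.add hdiff0
    rw [add_zero] at h
    exact h.congr fun n => by ring
  refine ⟨?_, hζhat0⟩
  -- abbreviate the target sets
  let T : ℕ → Set Ω := fun n => {ω |
        {x ∈ Θ | ζhat n ≤ G n ω x} ⊆ {x ∈ Θ | 0 ≤ g x}
        ∧ {x ∈ Θ | 0 ≤ g x} ⊆ {x ∈ Θ | -ζhat n ≤ G n ω x}}
  show 1 - α ≤ liminf (fun n : ℕ => (ℙ (T n)).toReal) atTop
  have hBmeas : ∀ n, MeasurableSet {ω | Z n ω ≤ ζhat n} := fun n => hZmeas n measurableSet_Iic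
  -- the a.s. domination sets
  set D : ℕ → Set Ω := fun N => {ω | ∀ m, N ≤ m → ∀ x ∈ Θ, |G m ω x - g x| ≤ Z m ω} with hD
  have hDmono : Monotone D := fun i j hij ω hw m hm x hx => hw m (le_trans hij hm) x hx
  have hDuniv : ℙ (⋃ N, D N) = 1 := by
    have hnull : ℙ ((⋃ N, D N)ᶜ) = 0 := by
      refine measure_mono_null ?_ (ae_iff.1 hZ)
      intro ω hω
      simp only [Set.mem_compl_iff, Set.mem_iUnion, not_exists] at hω
      simp only [Set.mem_setOf_eq]
      intro hev
      obtain ⟨N, hN⟩ := eventually_atTop.1 hev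
      exact hω N hN
    have h1 : (1 : ENNReal) ≤ ℙ (⋃ N, D N) := by
      have h2 := measure_union_le (μ := (ℙ : Measure Ω)) (⋃ N, D N) ((⋃ N, D N)ᶜ)
      rw [Set.union_compl_self, measure_univ, hnull, add_zero] at h2
      exact h2
    exact le_antisymm prob_le_one h1
  have hDtend : Tendsto (fun N => (ℙ (D N)).toReal) atTop (𝓝 1) := by
    have h1 := tendsto_measure_iUnion_atTop (μ := (ℙ : Measure Ω)) hDmono
    rw [hDuniv] at h1
    have h2 := (ENNReal.tendsto_toReal ENNReal.one_ne_top).comp h1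
    simpa [Function.comp_def] using h2
  -- quantile lower bound
  have hq1 : ∀ n, 1 - α ≤ (ℙ {ω | Z n ω ≤ ζ n}).toReal := fun n =>
    le_trans (quantile_prop (Z n) (hZmeas n) (by linarith) (by linarith))
      (ENNReal.toReal_mono (measure_ne_top _ _)
        (measure_mono (Set.setOf_subset_setOf.mpr fun ω h => le_trans h (hζq n))))
  have hqn : ∀ n : ℕ, 1 ≤ n →
      1 - α ≤ (ℙ {ω | Real.sqrt n * Z n ω ≤ Real.sqrt n * ζ n}).toReal := by
    intro n hn
    have hpos : (0 : ℝ) < Real.sqrt n := Real.sqrt_pos.2 (by exact_mod_cast hn)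
    have hset : {ω | Real.sqrt n * Z n ω ≤ Real.sqrt n * ζ n} = {ω | Z n ω ≤ ζ n} :=
      Set.ext fun ω => mul_le_mul_iff_right₀ hpos
    rw [hset]
    exact hq1 n
  -- √n (ζhat - ζ) → 0
  have hba : Tendsto (fun n : ℕ => Real.sqrt n * (ζhat n - ζ n)) atTop (𝓝 0) := by
    have h1 : (fun n : ℕ => Real.sqrt n * (ζhat n - ζ n)) =o[atTop]
        (fun n : ℕ => Real.sqrt n * ((n : ℝ) ^ (-(1 : ℝ) / 2))) :=
      (Asymptotics.isBigO_refl (fun n : ℕ => Real.sqrt n) atTop).mul_isLittleO hζhat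
    have h2 : (fun n : ℕ => Real.sqrt n * ((n : ℝ) ^ (-(1 : ℝ) / 2))) =ᶠ[atTop]
        (fun _ => (1 : ℝ)) := by
      filter_upwards [eventually_ge_atTop 1] with n hn
      have hn0 : (0 : ℝ) < n := by exact_mod_cast hn
      rw [Real.sqrt_eq_rpow, ← Real.rpow_add hn0,
        show (1 / 2 + -(1 : ℝ) / 2 : ℝ) = 0 by ring, Real.rpow_zero]
    exact (Asymptotics.isLittleO_one_iff ℝ).1 (h1.trans_isBigO h2.isBigO)
  -- surjectivity of F onto (0,1)
  have hrange : ∀ y : ℝ, 0 < y → y < 1 → ∃ u, F u = y := by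
    intro y hy0 hy1
    obtain ⟨a, ha⟩ := (hF0.eventually (eventually_lt_nhds hy0)).exists
    obtain ⟨b, hb⟩ := (hF1.eventually (eventually_gt_nhds hy1)).exists
    have hab : a ≤ b := le_of_lt (hFmono.lt_iff_lt.1 (lt_trans ha hb))
    obtain ⟨u, _, hu⟩ := intermediate_value_Icc hab hFc.continuousOn ⟨ha.le, hb.le⟩
    exact ⟨u, hu⟩
  -- the key eventual bound
  have key : ∀ ε : ℝ, 0 < ε → ε < (1 - α) / 2 → ∀ᶠ n in atTop,
      1 - α - 4 * ε ≤ (ℙ (T n)).toReal := by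
    intro ε hε hε2
    obtain ⟨u, hu⟩ := hrange (1 - α - ε) (by linarith) (by linarith)
    obtain ⟨v, hv⟩ := hrange (1 - α - 2 * ε) (by linarith) (by linarith)
    have hvu : v < u := hFmono.lt_iff_lt.1 (by rw [hu, hv]; linarith)
    have hau : ∀ᶠ n : ℕ in atTop, u ≤ Real.sqrt n * ζ n := by
      have hev := (hweak u).eventually
        (eventually_lt_nhds (show F u < 1 - α by rw [hu]; linarith))
      filter_upwards [hev, eventually_ge_atTop 1] with n h1 h2
      by_contra hcon
      push_neg at hcon
      have hmono : (ℙ {ω | Real.sqrt n * Z n ω ≤ Real.sqrt n * ζ n}).toReal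
          ≤ (ℙ {ω | Real.sqrt n * Z n ω ≤ u}).toReal :=
        ENNReal.toReal_mono (measure_ne_top _ _)
          (measure_mono (Set.setOf_subset_setOf.mpr fun ω h => le_trans h hcon.le))
      linarith [hqn n h2]
    have hbv : ∀ᶠ n : ℕ in atTop, v ≤ Real.sqrt n * ζhat n := by
      have hev := hba.eventually (eventually_gt_nhds (show -(u - v) < 0 by linarith))
      filter_upwards [hau, hev] with n h1 h2
      have heq : Real.sqrt n * ζhat n - Real.sqrt n * ζ n
          = Real.sqrt n * (ζhat n - ζ n) := by ring
      linarith
    have hHv : ∀ᶠ n : ℕ in atTop, 1 - α - 3 * ε ≤ (ℙ {ω | Real.sqrt n * Z n ω ≤ v}).toReal :=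
      (hweak v).eventually (eventually_ge_nhds (by rw [hv]; linarith))
    have hPB : ∀ᶠ n : ℕ in atTop, 1 - α - 3 * ε ≤ (ℙ {ω | Z n ω ≤ ζhat n}).toReal := by
      filter_upwards [hbv, hHv, eventually_ge_atTop 1] with n h1 h2 h3
      have hpos : (0 : ℝ) < Real.sqrt n := Real.sqrt_pos.2 (by exact_mod_cast h3)
      have hset : {ω | Real.sqrt n * Z n ω ≤ Real.sqrt n * ζhat n} = {ω | Z n ω ≤ ζhat n} :=
        Set.ext fun ω => mul_le_mul_iff_right₀ hpos
      calc 1 - α - 3 * ε ≤ (ℙ {ω | Real.sqrt n * Z n ω ≤ v}).toReal := h2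
        _ ≤ (ℙ {ω | Real.sqrt n * Z n ω ≤ Real.sqrt n * ζhat n}).toReal :=
            ENNReal.toReal_mono (measure_ne_top _ _)
              (measure_mono (Set.setOf_subset_setOf.mpr fun ω h => le_trans h h1))
        _ = _ := by rw [hset]
    obtain ⟨N₀, hN₀⟩ :=
      (hDtend.eventually (eventually_gt_nhds (show 1 - ε < 1 by linarith))).exists
    filter_upwards [hPB, eventually_ge_atTop N₀] with n h1 h2
    have hincl : D N₀ ∩ {ω | Z n ω ≤ ζhat n} ⊆ T n := by
      rintro ω ⟨hd, hz⟩
      have hdom : ∀ x ∈ Θ, |G n ω x - g x| ≤ Z n ω := hd n h2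
      have hz' : Z n ω ≤ ζhat n := hz
      constructor
      · rintro x ⟨hxΘ, hxg⟩
        have habs := abs_le.1 (hdom x hxΘ)
        exact ⟨hxΘ, by linarith [habs.1, habs.2]⟩
      · rintro x ⟨hxΘ, hxg⟩
        have habs := abs_le.1 (hdom x hxΘ)
        exact ⟨hxΘ, by linarith [habs.1, habs.2]⟩
    have hsum := measure_inter_add_diff (μ := (ℙ : Measure Ω)) (D N₀) (hBmeas n)
    have htr : (ℙ (D N₀ ∩ {ω | Z n ω ≤ ζhat n})).toReal
        + (ℙ (D N₀ \ {ω | Z n ω ≤ ζhat n})).toReal = (ℙ (D N₀)).toReal := by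
      rw [← ENNReal.toReal_add (measure_ne_top _ _) (measure_ne_top _ _), hsum]
    have hcomplval : (ℙ ({ω | Z n ω ≤ ζhat n}ᶜ)).toReal
        = 1 - (ℙ {ω | Z n ω ≤ ζhat n}).toReal := by
      rw [measure_compl (hBmeas n) (measure_ne_top _ _), measure_univ,
        ENNReal.toReal_sub_of_le prob_le_one ENNReal.one_ne_top, ENNReal.toReal_one]
    have hcompl : (ℙ (D N₀ \ {ω | Z n ω ≤ ζhat n})).toReal
        ≤ 1 - (ℙ {ω | Z n ω ≤ ζhat n}).toReal := by
      rw [← hcomplval]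
      exact ENNReal.toReal_mono (measure_ne_top _ _) (measure_mono fun ω hw => hw.2)
    have hfinal : (ℙ (D N₀ ∩ {ω | Z n ω ≤ ζhat n})).toReal ≤ (ℙ (T n)).toReal :=
      ENNReal.toReal_mono (measure_ne_top _ _) (measure_mono hincl)
    linarith
  -- wrap up with liminf
  have hf1 : ∀ n, (ℙ (T n)).toReal ≤ 1 := fun n => by
    simpa using ENNReal.toReal_mono ENNReal.one_ne_top (prob_le_one (μ := ℙ) (s := T n))
  have hcobdd : IsCoboundedUnder (· ≥ ·) atTop (fun n : ℕ => (ℙ (T n)).toReal) :=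
    (isBoundedUnder_of ⟨1, fun n => hf1 n⟩).isCoboundedUnder_ge
  by_contra hcon
  push_neg at hcon
  set L := liminf (fun n : ℕ => (ℙ (T n)).toReal) atTop with hL
  have hε0 : 0 < min ((1 - α - L) / 8) ((1 - α) / 4) := lt_min (by linarith) (by linarith)
  have hε2 : min ((1 - α - L) / 8) ((1 - α) / 4) < (1 - α) / 2 :=
    lt_of_le_of_lt (min_le_right _ _) (by linarith)
  have hlim := le_liminf_of_le hcobdd (key _ hε0 hε2)
  have h4 : min ((1 - α - L) / 8) ((1 - α) / 4) ≤ (1 - α - L) / 8 := min_le_left _ _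
  rw [← hL] at hlim
  linarith
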